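/- Let Y be a Banach space, U ⊆ ℝⁿ and V ⊆ ℝᵐ open and bounded, and g ∈ C^k(closure V, closure U) with g(closure V) ⊆ U (precomposition data). Then the precomposition map α̃_g : C^k(closure U, Y) → C^k(closure V, Y), f ↦ f ∘ g, is a continuous linear map between Banach spaces; in particular it is smooth. -/

import Mathlib

/-!
By Faà di Bruno's formula, the `i`-th derivative of `f ∘ g` at `x` is a sum, over ordered
partitions of `{0, …, i - 1}`, of derivatives of `f` at `g x` composed with derivatives of `g`
at `x`. Since `g` maps `closure V` into `U`, the same formula with the continuous extensions of
the derivatives of `f` and `g` gives the continuous extension of the derivative of `f ∘ g` to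
`closure V`. Its norm is at most `i! ‖f‖_{C^k} D^i` once all derivatives of `g` are bounded by
`D ≥ 1`, which they are because they extend continuously to the compact set `closure V`.
-/

noncomputable section

/-- Membership in `C^k(closure U, Y)`: `f` is `k` times continuously
differentiable on `U` and each iterated derivative of order `i ≤ k` extends
continuously to `closure U`. -/
def IsCkBar {E Y : Type*} [NormedAddCommGroup E] [NormedSpace ℝ E]
    [NormedAddCommGroup Y] [NormedSpace ℝ Y] (k : ℕ) (U : Set E) (f : E → Y) : Prop :=
  ContDiffOn ℝ k f U ∧
  ∀ i ≤ k, ∃ g : C(closure U, ContinuousMultilinearMap ℝ (fun _ : Fin i => E) Y),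
    ∀ x : closure U, (x : E) ∈ U → g x = iteratedFDerivWithin ℝ i f U x

/-- The `C^k` norm `‖f‖ = max_{i ≤ k} sup_{x ∈ U} ‖D^i f(x)‖` (which by density
equals the corresponding sup over `closure U` of the continuous extensions). -/
def ckNorm {E Y : Type*} [NormedAddCommGroup E] [NormedSpace ℝ E]
    [NormedAddCommGroup Y] [NormedSpace ℝ Y] (k : ℕ) (U : Set E) (f : E → Y) : ℝ :=
  ⨆ i : Fin (k + 1), ⨆ x : U, ‖iteratedFDerivWithin ℝ (i : ℕ) f U x‖

open Set

theorem Continuous.compAlongOrderedFinpartition {𝕜 X E F G : Type*}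
    [NontriviallyNormedField 𝕜] [TopologicalSpace X] [NormedAddCommGroup E] [NormedSpace 𝕜 E]
    [NormedAddCommGroup F] [NormedSpace 𝕜 F] [NormedAddCommGroup G] [NormedSpace 𝕜 G] {n : ℕ}
    (c : OrderedFinpartition n) {A : X → F [×c.length]→L[𝕜] G}
    {P : X → ∀ i : Fin c.length, E [×c.partSize i]→L[𝕜] F}
    (hA : Continuous A) (hP : ∀ i, Continuous fun x => P x i) :
    Continuous fun x => c.compAlongOrderedFinpartition (A x) (P x) :=
  continuous_eval.comp
    (((c.compAlongOrderedFinpartitionL 𝕜 E F G).continuous.comp hA).prodMk (continuous_pi hP))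

theorem iteratedFDerivWithin_comp_eq_sum {𝕜 E F G : Type*} [NontriviallyNormedField 𝕜]
    [NormedAddCommGroup E] [NormedSpace 𝕜 E] [NormedAddCommGroup F] [NormedSpace 𝕜 F]
    [NormedAddCommGroup G] [NormedSpace 𝕜 G] {N : WithTop ℕ∞} {f : F → G} {g : E → F}
    {s : Set E} {t : Set F} (hf : ContDiffOn 𝕜 N f t) (hg : ContDiffOn 𝕜 N g s)
    (ht : UniqueDiffOn 𝕜 t) (hs : UniqueDiffOn 𝕜 s) (hst : MapsTo g s t)
    {i : ℕ} (hi : i ≤ N) {x : E} (hx : x ∈ s) :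
    iteratedFDerivWithin 𝕜 i (f ∘ g) s x =
      ∑ c : OrderedFinpartition i, c.compAlongOrderedFinpartition
        (iteratedFDerivWithin 𝕜 c.length f t (g x))
        (fun m => iteratedFDerivWithin 𝕜 (c.partSize m) g s x) :=
  ((hf.ftaylorSeriesWithin ht).comp (hg.ftaylorSeriesWithin hs) hst
    |>.eq_iteratedFDerivWithin_of_uniqueDiffOn hi hs hx).symm

section CkBar

variable {E F Y : Type*} [NormedAddCommGroup E] [NormedSpace ℝ E] [NormedAddCommGroup F]
  [NormedSpace ℝ F] [NormedAddCommGroup Y] [NormedSpace ℝ Y] {k : ℕ}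

theorem IsCkBar.comp {U : Set F} {V : Set E} {f : F → Y} {g : E → F} (hf : IsCkBar k U f)
    (hg : IsCkBar k V g) (hgc : ContinuousOn g (closure V)) (hgmap : MapsTo g (closure V) U)
    (hU : UniqueDiffOn ℝ U) (hV : UniqueDiffOn ℝ V) : IsCkBar k V (f ∘ g) := by
  have hgVU : MapsTo g V U := hgmap.mono_left subset_closure
  refine ⟨hf.1.comp hg.1 hgVU, fun i hi => ?_⟩
  choose Df hDf using hf.2
  choose Dg hDg using hg.2
  let gbar : C(closure V, closure U) :=
    ⟨fun x => ⟨g x, subset_closure (hgmap x.2)⟩, hgc.domRestrict.subtype_mk _⟩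
  refine ⟨⟨fun x => ∑ c : OrderedFinpartition i,
      c.compAlongOrderedFinpartition (Df c.length (c.length_le.trans hi) (gbar x))
        (fun m => Dg (c.partSize m) ((c.partSize_le m).trans hi) x),
    continuous_finsetSum _ fun c _ => Continuous.compAlongOrderedFinpartition c
      ((Df _ _).continuous.comp gbar.continuous) fun m => (Dg _ _).continuous⟩, ?_⟩
  intro x hx
  rw [ContinuousMap.coe_mk,
    iteratedFDerivWithin_comp_eq_sum hf.1 hg.1 hU hV hgVU (by exact_mod_cast hi) hx]
  refine Finset.sum_congr rfl fun c _ => ?_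
  rw [hDf _ _ (gbar x) (hgmap x.2)]
  congr 1
  funext m
  exact hDg _ _ x hx

theorem IsCkBar.exists_bound {U : Set F} (hK : IsCompact (closure U)) {f : F → Y}
    (hf : IsCkBar k U f) :
    ∃ M : ℝ, ∀ i ≤ k, ∀ x ∈ U, ‖iteratedFDerivWithin ℝ i f U x‖ ≤ M := by
  have : CompactSpace (closure U) := isCompact_iff_compactSpace.mp hK
  have hbound (i : Fin (k + 1)) :
      ∃ M : ℝ, ∀ x ∈ U, ‖iteratedFDerivWithin ℝ i f U x‖ ≤ M := by
    obtain ⟨D, hD⟩ := hf.2 i (Nat.lt_succ_iff.mp i.2)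
    obtain ⟨M, hM⟩ := isBounded_iff_forall_norm_le.mp (isCompact_range D.continuous).isBounded
    exact ⟨M, fun x hx => hD ⟨x, subset_closure hx⟩ hx ▸ hM _ (mem_range_self _)⟩
  choose M hM using hbound
  refine ⟨Finset.univ.sup' Finset.univ_nonempty M, fun i hi x hx => ?_⟩
  exact (hM ⟨i, Nat.lt_succ_of_le hi⟩ x hx).trans (Finset.le_sup' M (Finset.mem_univ _))

theorem ckNorm_nonneg (k : ℕ) (U : Set F) (f : F → Y) : 0 ≤ ckNorm k U f :=
  Real.iSup_nonneg fun _ => Real.iSup_nonneg fun _ => norm_nonneg _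

theorem IsCkBar.norm_iteratedFDerivWithin_le_ckNorm {U : Set F} (hK : IsCompact (closure U))
    {f : F → Y} (hf : IsCkBar k U f) {i : ℕ} (hi : i ≤ k) {x : F} (hx : x ∈ U) :
    ‖iteratedFDerivWithin ℝ i f U x‖ ≤ ckNorm k U f := by
  obtain ⟨M, hM⟩ := hf.exists_bound hK
  have hbdd : BddAbove (range fun y : U => ‖iteratedFDerivWithin ℝ i f U y‖) := by
    refine ⟨M, ?_⟩
    rintro _ ⟨y, rfl⟩
    exact hM i hi y y.2
  exact (le_ciSup hbdd (⟨x, hx⟩ : U)).trans <|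
    le_ciSup (f := fun j : Fin (k + 1) => ⨆ y : U, ‖iteratedFDerivWithin ℝ j f U y‖)
      (Finite.bddAbove (finite_range _)) ⟨i, Nat.lt_succ_of_le hi⟩

theorem ckNorm_le_of_forall_le {U : Set F} {f : F → Y} {C : ℝ} (hC : 0 ≤ C)
    (h : ∀ i ≤ k, ∀ x ∈ U, ‖iteratedFDerivWithin ℝ i f U x‖ ≤ C) :
    ckNorm k U f ≤ C := by
  refine ciSup_le fun i => ?_
  rcases isEmpty_or_nonempty U with hU | hU
  · rwa [Real.iSup_of_isEmpty]
  · exact ciSup_le fun x => h i (Nat.lt_succ_iff.mp i.2) x x.2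

theorem ckNorm_comp_le {U : Set F} {V : Set E} (hK : IsCompact (closure U)) {f : F → Y}
    {g : E → F} (hf : IsCkBar k U f) (hg : ContDiffOn ℝ k g V) (hU : UniqueDiffOn ℝ U)
    (hV : UniqueDiffOn ℝ V) (hgVU : MapsTo g V U) {D : ℝ} (hD1 : 1 ≤ D)
    (hD : ∀ j ≤ k, ∀ x ∈ V, ‖iteratedFDerivWithin ℝ j g V x‖ ≤ D) :
    ckNorm k V (f ∘ g) ≤ k.factorial * D ^ k * ckNorm k U f := by
  have hf0 := ckNorm_nonneg k U f
  refine ckNorm_le_of_forall_le (by positivity) fun i hi x hx => ?_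
  calc ‖iteratedFDerivWithin ℝ i (f ∘ g) V x‖
      ≤ i.factorial * ckNorm k U f * D ^ i :=
        norm_iteratedFDerivWithin_comp_le hf.1 hg (by exact_mod_cast hi) hU hV hgVU hx
          (fun j hj => hf.norm_iteratedFDerivWithin_le_ckNorm hK (hj.trans hi) (hgVU hx))
          (fun j hj1 hji => (hD j (hji.trans hi) x hx).trans (le_self_pow₀ hD1 (by omega)))
    _ = i.factorial * D ^ i * ckNorm k U f := by ring
    _ ≤ k.factorial * D ^ k * ckNorm k U f := by gcongr

end CkBar

theorem stmt_16_general (n m k : ℕ) (Y : Type*) [NormedAddCommGroup Y] [NormedSpace ℝ Y]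
    (U : Set (EuclideanSpace ℝ (Fin n))) (V : Set (EuclideanSpace ℝ (Fin m)))
    (hUo : IsOpen U) (hUb : Bornology.IsBounded U)
    (hVo : IsOpen V) (hVb : Bornology.IsBounded V)
    (g : EuclideanSpace ℝ (Fin m) → EuclideanSpace ℝ (Fin n))
    (hg : IsCkBar k V g) (hgc : ContinuousOn g (closure V))
    (hgmap : Set.MapsTo g (closure V) U) :
    -- linearity of `f ↦ f ∘ g`
    (∀ f₁ f₂ : EuclideanSpace ℝ (Fin n) → Y,
      (fun x => (f₁ + f₂) (g x)) = (fun x => f₁ (g x)) + fun x => f₂ (g x)) ∧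
    (∀ (c : ℝ) (f : EuclideanSpace ℝ (Fin n) → Y),
      (fun x => (c • f) (g x)) = c • fun x => f (g x)) ∧
    -- well-definedness and boundedness
    ∃ C > (0 : ℝ), ∀ f : EuclideanSpace ℝ (Fin n) → Y, IsCkBar k U f →
      IsCkBar k V (fun x => f (g x)) ∧
      ckNorm k V (fun x => f (g x)) ≤ C * ckNorm k U f := by
  refine ⟨fun _ _ => rfl, fun _ _ => rfl, ?_⟩
  obtain ⟨M, hM⟩ := hg.exists_bound hVb.isCompact_closure
  refine ⟨k.factorial * max 1 M ^ k, by positivity, fun f hf => ⟨?_, ?_⟩⟩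
  · exact hf.comp hg hgc hgmap hUo.uniqueDiffOn hVo.uniqueDiffOn
  · exact ckNorm_comp_le hUb.isCompact_closure hf hg.1 hUo.uniqueDiffOn hVo.uniqueDiffOn
      (hgmap.mono_left subset_closure) (le_max_left 1 M)
      fun j hj x hx => (hM j hj x hx).trans (le_max_right 1 M)

/-- the precomposition map `α̃_g : C^k(closure U, Y) → C^k(closure V, Y)`,
`f ↦ f ∘ g`, is a well-defined continuous linear map (hence smooth). Linearity is
expressed pointwise and continuity as boundedness for the `C^k` norms. -/
theorem stmt_16 (n m k : ℕ) (Y : Type*) [NormedAddCommGroup Y] [NormedSpace ℝ Y]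
    [CompleteSpace Y]
    (U : Set (EuclideanSpace ℝ (Fin n))) (V : Set (EuclideanSpace ℝ (Fin m)))
    (hUo : IsOpen U) (hUb : Bornology.IsBounded U)
    (hVo : IsOpen V) (hVb : Bornology.IsBounded V)
    (g : EuclideanSpace ℝ (Fin m) → EuclideanSpace ℝ (Fin n))
    (hg : IsCkBar k V g) (hgc : ContinuousOn g (closure V))
    (hgmap : Set.MapsTo g (closure V) U) :
    -- linearity of `f ↦ f ∘ g`
    (∀ f₁ f₂ : EuclideanSpace ℝ (Fin n) → Y,
      (fun x => (f₁ + f₂) (g x)) = (fun x => f₁ (g x)) + fun x => f₂ (g x)) ∧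
    (∀ (c : ℝ) (f : EuclideanSpace ℝ (Fin n) → Y),
      (fun x => (c • f) (g x)) = c • fun x => f (g x)) ∧
    -- well-definedness and boundedness
    ∃ C > (0 : ℝ), ∀ f : EuclideanSpace ℝ (Fin n) → Y, IsCkBar k U f →
      IsCkBar k V (fun x => f (g x)) ∧
      ckNorm k V (fun x => f (g x)) ≤ C * ckNorm k U f :=
  stmt_16_general n m k Y U V hUo hUb hVo hVb g hg hgc hgmap
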